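/- Let S ⊆ {1,…,p1} satisfy (A1), and let P_e be Bien et al.'s penalty. Then for all θ ∈ R^{p1}: P_e(θ) ≥ P_e(θ_S) + ‖θ_{S^c}‖₁, and P_e(θ) ≤ 3‖θ‖₁; hence P_e satisfies (A3) with L1 = 1 and L2 = 3. -/

import Mathlib

open MeasureTheory ProbabilityTheory Finset Real Pointwise

noncomputable section

/-- Index type for main effects and two-way interactions: `p1 = p(p+1)/2` coordinates. -/
def InterIdx (p : ℕ) : Type := Fin p ⊕ {e : Fin p × Fin p // e.1 < e.2}

instance (p : ℕ) : Fintype (InterIdx p) := by unfold InterIdx; infer_instance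
instance (p : ℕ) : DecidableEq (InterIdx p) := by unfold InterIdx; infer_instance

/-- The interaction vector of a vector `x ∈ ℝ^p`. -/
def interVec {p : ℕ} (x : Fin p → ℝ) : InterIdx p → ℝ :=
  fun j => match j with
  | Sum.inl i => x i
  | Sum.inr e => x e.1.1 * x e.1.2

/-- Euclidean norm. -/
def l2 {ι : Type*} [Fintype ι] (v : ι → ℝ) : ℝ := Real.sqrt (∑ i, v i ^ 2)

/-- ℓ¹ norm. -/
def l1 {ι : Type*} [Fintype ι] (v : ι → ℝ) : ℝ := ∑ i, |v i|

/-- `restr v J` equals `v` on `J` and vanishes off `J`. -/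
def restr {ι : Type*} [Fintype ι] [DecidableEq ι] (v : ι → ℝ) (J : Finset ι) : ι → ℝ :=
  fun i => if i ∈ J then v i else 0

/-- The restricted eigenvalue constant `M(k0, s)`. -/
def REconst {ι : Type*} [Fintype ι] [DecidableEq ι] {n : ℕ}
    (Z : Matrix (Fin n) ι ℝ) (k0 : ℝ) (s : ℕ) : ℝ :=
  sInf { r : ℝ | ∃ (J : Finset ι) (α : ι → ℝ), J.card ≤ s ∧ restr α J ≠ 0 ∧
    l1 (restr α Jᶜ) ≤ k0 * l1 (restr α J) ∧
    r = l2 (Z.mulVec α) / (Real.sqrt n * l2 (restr α J)) }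

/-- `‖ξ‖_{ψ₂} ≤ K` (with all moments finite). -/
def Psi2Bdd {Ω : Type*} [MeasurableSpace Ω] (μ : Measure Ω) (ξ : Ω → ℝ) (K : ℝ) : Prop :=
  ∀ q : ℝ, 1 ≤ q → Integrable (fun ω => |ξ ω| ^ q) μ ∧
    (∫ ω, |ξ ω| ^ q ∂μ) ^ (1 / q) ≤ Real.sqrt q * K

/-- `‖ξ‖_{ψ₁} ≤ K` (subexponential, with all moments finite). -/
def Psi1Bdd {Ω : Type*} [MeasurableSpace Ω] (μ : Measure Ω) (ξ : Ω → ℝ) (K : ℝ) : Prop :=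
  ∀ q : ℝ, 1 ≤ q → Integrable (fun ω => |ξ ω| ^ q) μ ∧
    (∫ ω, |ξ ω| ^ q ∂μ) ^ (1 / q) ≤ q * K

/-- `‖X‖_{ψ₂} ≤ K` for a random vector: every unit linear functional is `ψ₂`-bounded by `K`. -/
def Psi2BddVec {Ω : Type*} [MeasurableSpace Ω] (μ : Measure Ω) {p : ℕ}
    (X : Ω → Fin p → ℝ) (K : ℝ) : Prop :=
  ∀ u : Fin p → ℝ, l2 u = 1 → Psi2Bdd μ (fun ω => ∑ i, u i * X ω i) K

/-- Centered interaction vector of `X`. -/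
def centInter {Ω : Type*} [MeasurableSpace Ω] (μ : Measure Ω) {p : ℕ}
    (X : Ω → Fin p → ℝ) (ω : Ω) (j : InterIdx p) : ℝ :=
  interVec (X ω) j - ∫ ω', interVec (X ω') j ∂μ

/-- The CAP penalty with exponent `q`. -/
def capPen {p : ℕ} (q : ℝ) (θ : InterIdx p → ℝ) : ℝ :=
  (∑ j : Fin p,
    (|θ (Sum.inl j)| ^ q +
      ∑ e : {e : Fin p × Fin p // e.1 < e.2},
        (if e.1.1 = j ∨ e.1.2 = j then |θ (Sum.inr e)| ^ q else 0)) ^ (1 / q))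
  + ∑ e : {e : Fin p × Fin p // e.1 < e.2}, |θ (Sum.inr e)|

/-- The penalty of Bien, Taylor and Tibshirani. -/
def bienPen {p : ℕ} (θ : InterIdx p → ℝ) : ℝ :=
  (∑ j : Fin p,
    max (|θ (Sum.inl j)|)
      (∑ e : {e : Fin p × Fin p // e.1 < e.2},
        (if e.1.1 = j ∨ e.1.2 = j then |θ (Sum.inr e)| else 0)))
  + ∑ e : {e : Fin p × Fin p // e.1 < e.2}, |θ (Sum.inr e)|

/-- (A1) strong hierarchy for a support set `S`. -/
def StrongHier {p : ℕ} (S : Finset (InterIdx p)) : Prop :=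
  ∀ e : {e : Fin p × Fin p // e.1 < e.2}, Sum.inr e ∈ S →
    Sum.inl e.1.1 ∈ S ∧ Sum.inl e.1.2 ∈ S

/-- The symmetric matrix `W(u)` built from the interaction coordinates of `u`. -/
def Wmat {p : ℕ} (u : InterIdx p → ℝ) : Matrix (Fin p) (Fin p) ℝ :=
  fun i j =>
    if h : i < j then u (Sum.inr ⟨(i, j), h⟩)
    else if h' : j < i then u (Sum.inr ⟨(j, i), h'⟩) else 0

/-- The quadratic part `X^T W(u) X`. -/
def quadW {Ω : Type*} {p : ℕ} (X : Ω → Fin p → ℝ) (u : InterIdx p → ℝ) (ω : Ω) : ℝ :=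
  ∑ i, ∑ j, Wmat u i j * X ω i * X ω j

/-- The linear part `X^T u^{(1)}`. -/
def linU {Ω : Type*} {p : ℕ} (X : Ω → Fin p → ℝ) (u : InterIdx p → ℝ) (ω : Ω) : ℝ :=
  ∑ i : Fin p, u (Sum.inl i) * X ω i

/-- Covariance of two real random variables. -/
def cova {Ω : Type*} [MeasurableSpace Ω] (μ : Measure Ω) (f g : Ω → ℝ) : ℝ :=
  ∫ ω, (f ω - ∫ ω', f ω' ∂μ) * (g ω - ∫ ω', g ω' ∂μ) ∂μ

/-- Smallest eigenvalue of the covariance of the interaction vector of `X`. -/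
def lamMinZ {Ω : Type*} [MeasurableSpace Ω] (μ : Measure Ω) {p : ℕ} (X : Ω → Fin p → ℝ) : ℝ :=
  sInf ((fun u : InterIdx p → ℝ =>
    variance (fun ω => ∑ j, u j * interVec (X ω) j) μ) '' {u | l2 u = 1})

/-- Largest eigenvalue of the covariance of the interaction vector of `X`. -/
def lamMaxZ {Ω : Type*} [MeasurableSpace Ω] (μ : Measure Ω) {p : ℕ} (X : Ω → Fin p → ℝ) : ℝ :=
  sSup ((fun u : InterIdx p → ℝ =>
    variance (fun ω => ∑ j, u j * interVec (X ω) j) μ) '' {u | l2 u = 1})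

/-- The measurable-space family for a joint family of vector and scalar random variables. -/
def jointMS {p n : ℕ} :
    ∀ k : Fin n ⊕ Fin n,
      MeasurableSpace (Sum.elim (fun _ : Fin n => Fin p → ℝ) (fun _ : Fin n => ℝ) k) :=
  fun k => match k with
  | Sum.inl _ => inferInstanceAs (MeasurableSpace (Fin p → ℝ))
  | Sum.inr _ => inferInstanceAs (MeasurableSpace ℝ)

/-- The joint family `(X_1,…,X_n,ε_1,…,ε_n)`. -/
def jointFam {Ω : Type*} {p n : ℕ} (Xs : Fin n → Ω → Fin p → ℝ) (es : Fin n → Ω → ℝ) :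
    ∀ k : Fin n ⊕ Fin n,
      Ω → Sum.elim (fun _ : Fin n => Fin p → ℝ) (fun _ : Fin n => ℝ) k :=
  fun k => match k with
  | Sum.inl i => Xs i
  | Sum.inr i => es i


/-
Writing `N_j(θ)` for the ℓ¹ norm of the interactions that involve `j`, the penalty is
`∑_j max(|θ_j|, N_j(θ)) + ∑_{j<k} |θ_{jk}|`. Each interaction enters exactly two of the `N_j`, so
`max ≤ sum` gives `P_e(θ) ≤ ‖θ_main‖₁ + 3 ‖θ_int‖₁ ≤ 3 ‖θ‖₁`. For the decomposability bound one
compares the summands index by index: interaction terms split exactly as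
`|θ_{jk}| = |(θ_S)_{jk}| + |(θ_{Sᶜ})_{jk}|`, and for a main effect `j ∈ S` the summand of `θ_S` is
dominated by that of `θ`, while for `j ∉ S` strong hierarchy kills every interaction of `θ_S`
involving `j`, so the summand of `θ_S` vanishes and `|θ_j| ≤ max(|θ_j|, N_j(θ))` pays for `θ_{Sᶜ}`.
-/

section Restriction

variable {ι : Type*} [Fintype ι] [DecidableEq ι]

lemma restr_of_mem {v : ι → ℝ} {J : Finset ι} {i : ι} (hi : i ∈ J) : restr v J i = v i :=
  if_pos hi

lemma restr_of_notMem {v : ι → ℝ} {J : Finset ι} {i : ι} (hi : i ∉ J) : restr v J i = 0 :=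
  if_neg hi

lemma abs_restr_le (v : ι → ℝ) (J : Finset ι) (i : ι) : |restr v J i| ≤ |v i| := by
  by_cases hi : i ∈ J
  · rw [restr_of_mem hi]
  · rw [restr_of_notMem hi, abs_zero]
    exact abs_nonneg _

lemma abs_restr_add_abs_restr_compl (v : ι → ℝ) (J : Finset ι) (i : ι) :
    |restr v J i| + |restr v Jᶜ i| = |v i| := by
  by_cases hi : i ∈ J
  · rw [restr_of_mem hi, restr_of_notMem (notMem_compl.mpr hi), abs_zero, add_zero]
  · rw [restr_of_notMem hi, restr_of_mem (mem_compl.mpr hi), abs_zero, zero_add]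

end Restriction

lemma sum_ite_eq_or_eq_of_ne {α : Type*} [Fintype α] [DecidableEq α] {a b : α} (hab : a ≠ b)
    (c : ℝ) : ∑ j, (if a = j ∨ b = j then c else 0) = 2 * c := by
  rw [sum_ite, sum_const_zero, add_zero, sum_const, nsmul_eq_mul]
  simp [filter_or, filter_eq, card_pair hab]

namespace InterIdx

variable {p : ℕ}

abbrev Pair (p : ℕ) : Type := {e : Fin p × Fin p // e.1 < e.2}

/- A bare `Sum.inl j` has type `Fin p ⊕ Pair p`, which `rw` and `simp` do not identify with
`InterIdx p`; these embeddings carry the right type. -/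
def main (j : Fin p) : InterIdx p := Sum.inl j

def pair (e : Pair p) : InterIdx p := Sum.inr e

def incidentL1 (θ : InterIdx p → ℝ) (j : Fin p) : ℝ :=
  ∑ e : Pair p, if e.1.1 = j ∨ e.1.2 = j then |θ (pair e)| else 0

lemma bienPen_eq (θ : InterIdx p → ℝ) :
    bienPen θ = ∑ j, max |θ (main j)| (incidentL1 θ j) + ∑ e : Pair p, |θ (pair e)| :=
  rfl

lemma l1_eq (θ : InterIdx p → ℝ) :
    l1 θ = ∑ j, |θ (main j)| + ∑ e : Pair p, |θ (pair e)| :=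
  Fintype.sum_sum_type _

lemma incidentL1_nonneg (θ : InterIdx p → ℝ) (j : Fin p) : 0 ≤ incidentL1 θ j :=
  sum_nonneg fun _ _ => by split_ifs <;> positivity

lemma sum_incidentL1 (θ : InterIdx p → ℝ) :
    ∑ j, incidentL1 θ j = 2 * ∑ e : Pair p, |θ (pair e)| := by
  simp only [incidentL1]
  rw [sum_comm, mul_sum]
  exact sum_congr rfl fun e _ => sum_ite_eq_or_eq_of_ne e.2.ne _

lemma incidentL1_restr_le (θ : InterIdx p → ℝ) (S : Finset (InterIdx p)) (j : Fin p) :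
    incidentL1 (restr θ S) j ≤ incidentL1 θ j :=
  sum_le_sum fun e _ => by split_ifs <;> simp [abs_restr_le]

lemma incidentL1_restr_eq_zero {S : Finset (InterIdx p)} (hS : StrongHier S) (θ : InterIdx p → ℝ)
    {j : Fin p} (hj : main j ∉ S) : incidentL1 (restr θ S) j = 0 := by
  refine sum_eq_zero fun e _ => ?_
  split_ifs with he
  · have heS : pair e ∉ S := fun heS => by
      obtain ⟨h₁, h₂⟩ := hS e heS
      rcases he with rfl | rfl <;> contradiction
    rw [restr_of_notMem heS, abs_zero]
  · rfl

lemma bienPen_le_three_mul_l1 (θ : InterIdx p → ℝ) : bienPen θ ≤ 3 * l1 θ := by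
  have hmax (j : Fin p) : max |θ (main j)| (incidentL1 θ j) ≤
      |θ (main j)| + incidentL1 θ j :=
    max_le (le_add_of_nonneg_right (incidentL1_nonneg θ j))
      (le_add_of_nonneg_left (abs_nonneg _))
  have hmain : 0 ≤ ∑ j, |θ (main j)| := sum_nonneg fun _ _ => abs_nonneg _
  calc bienPen θ
      ≤ ∑ j, (|θ (main j)| + incidentL1 θ j) + ∑ e : Pair p, |θ (pair e)| := by
        rw [bienPen_eq]; gcongr with j; exact hmax j
    _ = ∑ j, |θ (main j)| + 3 * ∑ e : Pair p, |θ (pair e)| := by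
        rw [sum_add_distrib, sum_incidentL1]; ring
    _ ≤ 3 * l1 θ := by rw [l1_eq]; linarith

lemma max_restr_add_abs_restr_compl_le {S : Finset (InterIdx p)} (hS : StrongHier S)
    (θ : InterIdx p → ℝ) (j : Fin p) :
    max |restr θ S (main j)| (incidentL1 (restr θ S) j) + |restr θ Sᶜ (main j)| ≤
      max |θ (main j)| (incidentL1 θ j) := by
  by_cases hj : main j ∈ S
  · rw [restr_of_mem hj, restr_of_notMem (notMem_compl.mpr hj), abs_zero, add_zero]
    exact max_le_max le_rfl (incidentL1_restr_le θ S j)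
  · rw [restr_of_notMem hj, restr_of_mem (mem_compl.mpr hj), incidentL1_restr_eq_zero hS θ hj,
      abs_zero, max_self, zero_add]
    exact le_max_left _ _

lemma bienPen_restr_add_l1_restr_compl_le {S : Finset (InterIdx p)} (hS : StrongHier S)
    (θ : InterIdx p → ℝ) : bienPen (restr θ S) + l1 (restr θ Sᶜ) ≤ bienPen θ := by
  rw [bienPen_eq, bienPen_eq, l1_eq]
  calc _ = ∑ j, (max |restr θ S (main j)| (incidentL1 (restr θ S) j)
          + |restr θ Sᶜ (main j)|)
        + ∑ e : Pair p, (|restr θ S (pair e)| + |restr θ Sᶜ (pair e)|) := by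
        simp only [sum_add_distrib]; ring
    _ ≤ _ := by
        simp only [abs_restr_add_abs_restr_compl]
        gcongr with j
        exact max_restr_add_abs_restr_compl_le hS θ j

end InterIdx

/-- under strong hierarchy (A1), the penalty of Bien et al. satisfies (A3) with
`L1 = 1` and `L2 = 3`. -/
theorem statement_10 {p : ℕ}
    (S : Finset (InterIdx p)) (hA1 : StrongHier S) :
    ∀ θ : InterIdx p → ℝ,
      bienPen (restr θ S) + l1 (restr θ Sᶜ) ≤ bienPen θ ∧
        bienPen θ ≤ 3 * l1 θ ∧
        bienPen (restr θ S) ≤ 3 * l1 (restr θ S) :=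
  fun θ => ⟨InterIdx.bienPen_restr_add_l1_restr_compl_le hA1 θ,
    InterIdx.bienPen_le_three_mul_l1 θ, InterIdx.bienPen_le_three_mul_l1 _⟩

end
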